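/- Let ψ, φ, γ ∈ ℂ[[t]] be formal power series satisfying the functional equation γ·φ = φ + φ′·ψ in ℂ[[t]] (φ′ the formal derivative; this is the paper's condition γ = 1 + (ln φ)′ψ), and fix h ∈ ℂ. On A = ℂ[x⁰,x¹,x²,x³], set A_op := ih·∂₀ and define x̂^j := x^j∘φ(A_op) for j = 1,2,3 and x̂⁰ := x⁰∘ψ(A_op) + ih·(Σ_{k=1}^{3} x^k∘∂_k)∘γ(A_op). Then [x̂⁰, x̂^j] = ih·x̂^j and [x̂^j, x̂^k] = 0 for all j,k ∈ {1,2,3}. -/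

import Mathlib

/-!
On a polynomial of `x⁰`-degree `< N` the operator `g(A_op)` is the polynomial truncation of `g`
below degree `N` evaluated at `A_op = ih∂₀`, because `A_opᴺ` kills such a polynomial. Hence
`g ↦ g(A_op)` is additive and multiplicative, commutes with every operator commuting with `∂₀`
(so with `x^j` and `∂_j` for `j ≠ 0`), and `[A_op, x⁰] = ih` gives `[g(A_op), x⁰] = ih·g′(A_op)`.
With `[x^k∂_k, x^j] = x^j` the commutator `[x̂⁰, x̂^j]` then collapses to
`ih·x^j((γφ)(A_op) − (φ′ψ)(A_op)) = ih·x^j φ(A_op)` by the functional equation.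
-/

open MvPolynomial

noncomputable section

def Xop (μ : Fin 4) : Module.End ℂ (MvPolynomial (Fin 4) ℂ) :=
  LinearMap.mulLeft ℂ (X μ)

def Dop (μ : Fin 4) : Module.End ℂ (MvPolynomial (Fin 4) ℂ) :=
  (pderiv μ).toLinearMap

/-- The operator `Σ_{n≥0} g n • ∂₀ⁿ` on `ℂ[x⁰,x¹,x²,x³]`; it is well defined since `∂₀` is
locally nilpotent on polynomials (on the monomial `x^m` only the terms with `n ≤ m 0` are
nonzero, so the series reduces to the indicated finite sum on each basis monomial). -/
def seriesOp (g : ℕ → ℂ) : Module.End ℂ (MvPolynomial (Fin 4) ℂ) :=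
  (basisMonomials (Fin 4) ℂ).constr ℂ fun m : Fin 4 →₀ ℕ =>
    ∑ n ∈ Finset.range (m 0 + 1), g n • (Dop 0 ^ n) (monomial m 1)

/-- For a formal power series `g = Σₙ gₙtⁿ ∈ ℂ[[t]]`, the operator
`g(A_op) := Σₙ gₙ(ih)ⁿ∂₀ⁿ`, where `A_op = ih·∂₀`. -/
def opOf (h : ℂ) (g : PowerSeries ℂ) : Module.End ℂ (MvPolynomial (Fin 4) ℂ) :=
  seriesOp fun n => PowerSeries.coeff n g * (Complex.I * h) ^ n

theorem aeval_mul_eq_of_mul_eq_add_smul_one {R A : Type*} [CommSemiring R] [Semiring A]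
    [Algebra R A] {D Y : A} {c : R} (hDY : D * Y = Y * D + c • 1)
    (q : Polynomial R) :
    Polynomial.aeval D q * Y =
      Y * Polynomial.aeval D q + c • Polynomial.aeval D (Polynomial.derivative q) := by
  induction q using Polynomial.induction_on with
  | C a => simp [Algebra.commutes]
  | add p q hp hq =>
    simp only [map_add, add_mul, mul_add, smul_add, hp, hq]
    abel
  | monomial n a ih =>
    rw [pow_succ, ← mul_assoc]
    generalize Polynomial.C a * Polynomial.X ^ n = r at ih ⊢
    rw [Polynomial.derivative_mul, Polynomial.derivative_X, mul_one, map_add, map_mul, map_mul,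
      Polynomial.aeval_X, mul_assoc, hDY, mul_add, ← mul_assoc, ih]
    simp only [add_mul, smul_add, mul_assoc, smul_mul_assoc, mul_smul_comm, mul_one]
    abel

theorem aeval_apply_eq_of_coeff_eq {R M : Type*} [CommRing R] [AddCommGroup M] [Module R M]
    {D : Module.End R M} {N : ℕ} {v : M} (hv : (D ^ N) v = 0) {q₁ q₂ : Polynomial R}
    (hq : ∀ d < N, q₁.coeff d = q₂.coeff d) :
    Polynomial.aeval D q₁ v = Polynomial.aeval D q₂ v := by
  obtain ⟨s, hs⟩ := (Polynomial.X_pow_dvd_iff (f := q₁ - q₂)).mpr fun d hd => by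
    rw [Polynomial.coeff_sub, hq d hd, sub_self]
  rw [← sub_eq_zero, ← LinearMap.sub_apply, ← map_sub, hs, mul_comm, map_mul,
    Polynomial.aeval_X_pow, Module.End.mul_apply, hv, map_zero]

theorem Dop_apply (μ : Fin 4) (p : MvPolynomial (Fin 4) ℂ) : Dop μ p = pderiv μ p := rfl

theorem Xop_apply (μ : Fin 4) (p : MvPolynomial (Fin 4) ℂ) : Xop μ p = X μ * p := rfl

theorem Xop_commute (j k : Fin 4) : Commute (Xop j) (Xop k) :=
  LinearMap.ext fun p => by
    simp only [Module.End.mul_apply, Xop_apply]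
    ring

theorem Dop_mul_Xop_of_ne {j k : Fin 4} (hjk : j ≠ k) : Dop j * Xop k = Xop k * Dop j :=
  LinearMap.ext fun p => by
    simp [Dop_apply, Xop_apply, pderiv_X_of_ne hjk.symm]

theorem Dop_mul_Xop_self (j : Fin 4) : Dop j * Xop j = Xop j * Dop j + 1 :=
  LinearMap.ext fun p => by
    simp [Dop_apply, Xop_apply, add_comm]

theorem Dop_commute (j k : Fin 4) : Commute (Dop j) (Dop k) := by
  rcases eq_or_ne j k with rfl | hjk
  · rfl
  refine (basisMonomials (Fin 4) ℂ).ext fun m => ?_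
  simp only [coe_basisMonomials, Module.End.mul_apply, Dop, Derivation.coeFn_coe, pderiv_monomial,
    tsub_tsub, add_comm (Finsupp.single j 1)]
  congr 1
  simp [hjk, hjk.symm, mul_comm]

theorem pow_Dop_monomial_of_lt {μ : Fin 4} {m : Fin 4 →₀ ℕ} {n : ℕ} (c : ℂ) (hn : m μ < n) :
    (Dop μ ^ n) (monomial m c) = 0 := by
  induction n generalizing m c with
  | zero => omega
  | succ n ih =>
    rw [pow_succ, Module.End.mul_apply, Dop_apply, pderiv_monomial]
    rcases Nat.eq_zero_or_pos (m μ) with h0 | h0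
    · simp [h0]
    · exact ih _ (by simp; omega)

theorem seriesOp_monomial (g : ℕ → ℂ) (m : Fin 4 →₀ ℕ) (c : ℂ) :
    seriesOp g (monomial m c) =
      ∑ n ∈ Finset.range (m 0 + 1), g n • (Dop 0 ^ n) (monomial m c) := by
  have hc : monomial m c = c • (basisMonomials (Fin 4) ℂ) m := by
    rw [coe_basisMonomials, smul_monomial, smul_eq_mul, mul_one]
  rw [seriesOp, hc, map_smul, Module.Basis.constr_basis, Finset.smul_sum]
  simp only [map_smul, smul_comm c, coe_basisMonomials]

def Aop (h : ℂ) : Module.End ℂ (MvPolynomial (Fin 4) ℂ) :=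
  (Complex.I * h) • Dop 0

theorem Aop_mul_Xop_zero (h : ℂ) : Aop h * Xop 0 = Xop 0 * Aop h + (Complex.I * h) • 1 := by
  rw [Aop, smul_mul_assoc, Dop_mul_Xop_self, smul_add, mul_smul_comm]

theorem opOf_monomial (h : ℂ) (g : PowerSeries ℂ) (m : Fin 4 →₀ ℕ) (c : ℂ) :
    opOf h g (monomial m c) =
      Polynomial.aeval (Aop h) (PowerSeries.trunc (m 0 + 1) g) (monomial m c) := by
  rw [opOf, seriesOp_monomial,
    Polynomial.aeval_eq_sum_range' (PowerSeries.natDegree_trunc_lt g _), LinearMap.sum_apply]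
  refine Finset.sum_congr rfl fun n hn => ?_
  rw [PowerSeries.coeff_trunc, if_pos (Finset.mem_range.1 hn), Aop, smul_pow,
    LinearMap.smul_apply, LinearMap.smul_apply, smul_smul]

theorem opOf_apply_eq_aeval {h : ℂ} {g : PowerSeries ℂ} {q : Polynomial ℂ} {N : ℕ}
    {p : MvPolynomial (Fin 4) ℂ} (hq : ∀ d < N, q.coeff d = PowerSeries.coeff d g)
    (hp : degreeOf 0 p < N) :
    opOf h g p = Polynomial.aeval (Aop h) q p := by
  rw [p.as_sum, map_sum, map_sum]
  refine Finset.sum_congr rfl fun m hm => ?_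
  have hmN : m 0 < N := (monomial_le_degreeOf 0 hm).trans_lt hp
  have hvanish : (Aop h ^ (m 0 + 1)) (monomial m (coeff m p)) = 0 := by
    rw [Aop, smul_pow, LinearMap.smul_apply, pow_Dop_monomial_of_lt _ (m 0).lt_succ_self,
      smul_zero]
  rw [opOf_monomial]
  refine aeval_apply_eq_of_coeff_eq hvanish fun d hd => ?_
  rw [PowerSeries.coeff_trunc, if_pos hd, hq d (by omega)]

theorem opOf_apply_eq_aeval_trunc {h : ℂ} {g : PowerSeries ℂ} {N : ℕ}
    {p : MvPolynomial (Fin 4) ℂ} (hp : degreeOf 0 p < N) :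
    opOf h g p = Polynomial.aeval (Aop h) (PowerSeries.trunc N g) p :=
  opOf_apply_eq_aeval (fun d hd => by rw [PowerSeries.coeff_trunc, if_pos hd]) hp

theorem opOf_add (h : ℂ) (f g : PowerSeries ℂ) : opOf h (f + g) = opOf h f + opOf h g :=
  LinearMap.ext fun p => by
    have hp := (degreeOf 0 p).lt_succ_self
    rw [LinearMap.add_apply, opOf_apply_eq_aeval_trunc hp, opOf_apply_eq_aeval_trunc hp,
      opOf_apply_eq_aeval_trunc hp, map_add, map_add, LinearMap.add_apply]

theorem opOf_mul (h : ℂ) (f g : PowerSeries ℂ) : opOf h (f * g) = opOf h f * opOf h g :=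
  LinearMap.ext fun p => by
    set N := degreeOf 0 p + degreeOf 0 (opOf h g p) + 1
    have hp : degreeOf 0 p < N := by omega
    have hgp : degreeOf 0 (opOf h g p) < N := by omega
    have hfg : ∀ d < N, (PowerSeries.trunc N f * PowerSeries.trunc N g).coeff d =
        PowerSeries.coeff d (f * g) := fun d hd => by
      rw [PowerSeries.coeff_mul_eq_coeff_trunc_mul_trunc f g hd, ← Polynomial.coe_mul,
        Polynomial.coeff_coe]
    rw [Module.End.mul_apply, opOf_apply_eq_aeval hfg hp, opOf_apply_eq_aeval_trunc hgp,
      opOf_apply_eq_aeval_trunc hp, map_mul, Module.End.mul_apply]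

theorem opOf_commute_of_commute (h : ℂ) (g : PowerSeries ℂ)
    {T : Module.End ℂ (MvPolynomial (Fin 4) ℂ)} (hT : Commute (Dop 0) T) :
    Commute (opOf h g) T :=
  LinearMap.ext fun p => by
    set N := degreeOf 0 p + degreeOf 0 (T p) + 1
    have hAT : Commute T (Polynomial.aeval (Aop h) (PowerSeries.trunc N g)) :=
      Algebra.commute_of_mem_adjoin_singleton_of_commute
        (Polynomial.aeval_mem_adjoin_singleton ℂ _) (hT.smul_left (Complex.I * h)).symm
    rw [Module.End.mul_apply, Module.End.mul_apply,
      opOf_apply_eq_aeval_trunc (N := N) (by omega), opOf_apply_eq_aeval_trunc (N := N) (by omega),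
      ← Module.End.mul_apply, hAT.symm.eq, Module.End.mul_apply]

theorem opOf_mul_Xop_zero (h : ℂ) (g : PowerSeries ℂ) :
    opOf h g * Xop 0 =
      Xop 0 * opOf h g + (Complex.I * h) • opOf h (PowerSeries.derivative ℂ g) :=
  LinearMap.ext fun p => by
    set N := degreeOf 0 p + degreeOf 0 (Xop 0 p) + 1
    have hp : degreeOf 0 p < N := by omega
    have hXp : degreeOf 0 (Xop 0 p) < N + 1 := by omega
    have hcomm := congrArg (· p) (aeval_mul_eq_of_mul_eq_add_smul_one (Aop_mul_Xop_zero h)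
      (PowerSeries.trunc (N + 1) g))
    simp only [Module.End.mul_apply, LinearMap.add_apply, LinearMap.smul_apply] at hcomm ⊢
    rw [opOf_apply_eq_aeval_trunc hXp, hcomm, ← opOf_apply_eq_aeval_trunc (Nat.lt_succ_of_lt hp),
      ← PowerSeries.trunc_derivative, ← opOf_apply_eq_aeval_trunc hp]

theorem ne_zero_of_mem_spatial {j : Fin 4} (hj : j ∈ ({1, 2, 3} : Finset (Fin 4))) : j ≠ 0 := by
  revert j
  decide

def spatialEulerOp : Module.End ℂ (MvPolynomial (Fin 4) ℂ) :=
  ∑ k ∈ ({1, 2, 3} : Finset (Fin 4)), Xop k * Dop k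

theorem spatialEulerOp_mul_Xop {j : Fin 4} (hj : j ∈ ({1, 2, 3} : Finset (Fin 4))) :
    spatialEulerOp * Xop j = Xop j * spatialEulerOp + Xop j := by
  have hterm : ∀ k,
      Xop k * Dop k * Xop j = Xop j * (Xop k * Dop k) + if k = j then Xop j else 0 := by
    intro k
    rcases eq_or_ne k j with rfl | hkj
    · rw [mul_assoc, Dop_mul_Xop_self, mul_add, mul_one, (Xop_commute k k).left_comm, if_pos rfl]
    · rw [mul_assoc, Dop_mul_Xop_of_ne hkj, ← mul_assoc, (Xop_commute k j).eq, mul_assoc,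
        if_neg hkj, add_zero]
  rw [spatialEulerOp, Finset.sum_mul, Finset.mul_sum, Finset.sum_congr rfl fun k _ => hterm k,
    Finset.sum_add_distrib, Finset.sum_ite_eq' _ _ (fun _ => Xop j), if_pos hj]

theorem opOf_commute_Xop (h : ℂ) (g : PowerSeries ℂ) {j : Fin 4} (hj : j ≠ 0) :
    Commute (opOf h g) (Xop j) :=
  opOf_commute_of_commute h g (Dop_mul_Xop_of_ne hj.symm)

theorem opOf_commute_spatialEulerOp (h : ℂ) (g : PowerSeries ℂ) :
    Commute (opOf h g) spatialEulerOp :=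
  Commute.sum_right _ _ _ fun k hk =>
    (opOf_commute_Xop h g (ne_zero_of_mem_spatial hk)).mul_right
      (opOf_commute_of_commute h g (Dop_commute 0 k))

def xHat (h : ℂ) (φ : PowerSeries ℂ) (j : Fin 4) : Module.End ℂ (MvPolynomial (Fin 4) ℂ) :=
  Xop j * opOf h φ

def xHatZero (h : ℂ) (ψ γ : PowerSeries ℂ) : Module.End ℂ (MvPolynomial (Fin 4) ℂ) :=
  Xop 0 * opOf h ψ + (Complex.I * h) • (spatialEulerOp * opOf h γ)

theorem xHatZero_mul_xHat_sub_xHat_mul_xHatZero {ψ φ γ : PowerSeries ℂ} (h : ℂ)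
    (hcomp : γ * φ = φ + PowerSeries.derivative ℂ φ * ψ) {j : Fin 4}
    (hj : j ∈ ({1, 2, 3} : Finset (Fin 4))) :
    xHatZero h ψ γ * xHat h φ j - xHat h φ j * xHatZero h ψ γ = (Complex.I * h) • xHat h φ j := by
  have hj0 := ne_zero_of_mem_spatial hj
  have e1 : Xop 0 * opOf h ψ * (Xop j * opOf h φ) = Xop j * (Xop 0 * opOf h (ψ * φ)) := by
    rw [opOf_mul, mul_assoc, (opOf_commute_Xop h ψ hj0).left_comm, (Xop_commute 0 j).left_comm]
  have e2 : spatialEulerOp * opOf h γ * (Xop j * opOf h φ) =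
      Xop j * (spatialEulerOp * opOf h (γ * φ)) + Xop j * opOf h (γ * φ) := by
    rw [opOf_mul, mul_assoc, (opOf_commute_Xop h γ hj0).left_comm, ← mul_assoc spatialEulerOp,
      spatialEulerOp_mul_Xop hj, add_mul, mul_assoc]
  have e3 : Xop j * opOf h φ * (Xop 0 * opOf h ψ) = Xop j * (Xop 0 * opOf h (φ * ψ)) +
      (Complex.I * h) • (Xop j * opOf h (PowerSeries.derivative ℂ φ * ψ)) := by
    rw [opOf_mul, opOf_mul, mul_assoc, ← mul_assoc (opOf h φ), opOf_mul_Xop_zero, add_mul,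
      smul_mul_assoc, mul_add, mul_smul_comm, mul_assoc]
  have e4 : Xop j * opOf h φ * (spatialEulerOp * opOf h γ) =
      Xop j * (spatialEulerOp * opOf h (φ * γ)) := by
    rw [opOf_mul, mul_assoc, (opOf_commute_spatialEulerOp h φ).left_comm]
  rw [xHatZero, xHat, add_mul, mul_add, smul_mul_assoc, mul_smul_comm, e1, e2, e3, e4,
    mul_comm φ ψ, mul_comm φ γ, hcomp, opOf_add]
  simp only [mul_add, smul_add]
  abel

theorem xHat_commute (h : ℂ) (φ : PowerSeries ℂ) {j k : Fin 4} (hj : j ≠ 0) (hk : k ≠ 0) :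
    Commute (xHat h φ j) (xHat h φ k) :=
  ((Xop_commute j k).mul_right (opOf_commute_Xop h φ hj).symm).mul_left
    ((opOf_commute_Xop h φ hk).mul_right (Commute.refl _))

/-- The general noncovariant family of Heisenberg realizations of κ-Minkowski spacetime:
if `ψ, φ, γ ∈ ℂ[[t]]` satisfy `γ·φ = φ + φ′·ψ` then, with `A_op := ih∂₀`,
`x̂^j := x^j∘φ(A_op)` and `x̂⁰ := x⁰∘ψ(A_op) + ih·(Σ_{k=1}^{3} x^k∘∂_k)∘γ(A_op)`
satisfy `[x̂⁰, x̂^j] = ih·x̂^j` and `[x̂^j, x̂^k] = 0`. -/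
theorem noncovariant_realization_kappa_minkowski (ψ φ γ : PowerSeries ℂ) (h : ℂ)
    (hcomp : γ * φ = φ + PowerSeries.derivative ℂ φ * ψ) :
    (∀ j ∈ ({1, 2, 3} : Finset (Fin 4)),
      (Xop 0 * opOf h ψ
          + (Complex.I * h) • ((∑ k ∈ ({1, 2, 3} : Finset (Fin 4)), Xop k * Dop k) * opOf h γ))
          * (Xop j * opOf h φ)
        - (Xop j * opOf h φ)
          * (Xop 0 * opOf h ψ
          + (Complex.I * h) • ((∑ k ∈ ({1, 2, 3} : Finset (Fin 4)), Xop k * Dop k) * opOf h γ))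
        = (Complex.I * h) • (Xop j * opOf h φ)) ∧
    (∀ j ∈ ({1, 2, 3} : Finset (Fin 4)), ∀ k ∈ ({1, 2, 3} : Finset (Fin 4)),
      (Xop j * opOf h φ) * (Xop k * opOf h φ)
        - (Xop k * opOf h φ) * (Xop j * opOf h φ) = 0) := by
  exact ⟨fun j hj => xHatZero_mul_xHat_sub_xHat_mul_xHatZero h hcomp hj, fun j hj k hk =>
    sub_eq_zero.mpr (xHat_commute h φ (ne_zero_of_mem_spatial hj) (ne_zero_of_mem_spatial hk)).eq⟩

end
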